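/- Let M, L ∈ ℝ^{d×d} be symmetric invertible matrices with L − M positive semidefinite such that M and L are congruent and M + L is invertible. Let D be the Moore–Penrose pseudoinverse of L − M and Π := I_d − D(L − M). Then for every ρ ∈ ℝ with ρ > max{|λ| : λ a complex eigenvalue of (M + L)⁻¹(L − M)}, there exists r₀ > 0 such that for all real r ≥ r₀ the matrix ρ²(L + M)(D + rΠ)(L + M) − (L − M) is positive definite. -/

import Mathlib

/-!
Put `Q = L - M`, `S = M + L` and `Π = 1 - D Q`, the orthogonal projection onto `ker Q`.
Conjugating by `S`, the claim is that `(ρ² D - S⁻¹ Q S⁻¹) + ρ² r Π` is positive definite for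
large `r`. By Finsler's lemma it suffices that `yᵀ S⁻¹ Q S⁻¹ y < ρ² yᵀ D y` for nonzero `y` in
`ker Π = range Q`. Factor `Q = Bᵀ B` and set `u = B D y`, `G = B S⁻¹ Bᵀ`: then `|u|² = yᵀ D y`
and `|G u|² = yᵀ S⁻¹ Q S⁻¹ y`, while `G` is symmetric and its nonzero eigenvalues are
eigenvalues of `S⁻¹ Q`, hence of modulus `< ρ`.
-/

open Matrix

/-- Two real symmetric matrices are congruent if `Tᵀ M T = L` for some invertible `T`. -/
def MatCongruent {d : ℕ} (M L : Matrix (Fin d) (Fin d) ℝ) : Prop :=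
  ∃ T : Matrix (Fin d) (Fin d) ℝ, IsUnit T ∧ Tᵀ * M * T = L

/-- `D` is the Moore–Penrose pseudoinverse of `Q`. -/
def IsMoorePenrose {d : ℕ} (Q D : Matrix (Fin d) (Fin d) ℝ) : Prop :=
  Q * D * Q = Q ∧ D * Q * D = D ∧ (Q * D)ᵀ = Q * D ∧ (D * Q)ᵀ = D * Q

open Filter

namespace Matrix

variable {n : Type*} [Fintype n]

theorem PosDef.of_isEmpty [IsEmpty n] (A : Matrix n n ℝ) : A.PosDef :=
  .of_dotProduct_mulVec_pos (by ext i; exact isEmptyElim i) fun _ hx ↦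
    (hx (Subsingleton.elim _ _)).elim

theorem dotProduct_mulVec_smul_self (A : Matrix n n ℝ) (c : ℝ) (x : n → ℝ) :
    (c • x) ⬝ᵥ (A *ᵥ (c • x)) = c ^ 2 * (x ⬝ᵥ (A *ᵥ x)) := by
  rw [mulVec_smul, dotProduct_smul, smul_dotProduct, smul_eq_mul, smul_eq_mul]; ring

theorem mulVec_dotProduct {m : Type*} [Fintype m] (B : Matrix m n ℝ) (v : n → ℝ) (w : m → ℝ) :
    (B *ᵥ v) ⬝ᵥ w = v ⬝ᵥ (Bᵀ *ᵥ w) := by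
  rw [dotProduct_mulVec, vecMul_transpose]

/-- Finsler's lemma. -/
theorem eventually_posDef_add_smul {A B : Matrix n n ℝ} (hA : A.IsHermitian) (hB : B.PosSemidef)
    (h : ∀ x ≠ 0, B *ᵥ x = 0 → 0 < x ⬝ᵥ (A *ᵥ x)) :
    ∀ᶠ r : ℝ in atTop, (A + r • B).PosDef := by
  set K := Metric.sphere (0 : n → ℝ) 1
  have hqA : Continuous fun x : n → ℝ ↦ x ⬝ᵥ (A *ᵥ x) := by fun_prop
  have hqB : Continuous fun x : n → ℝ ↦ x ⬝ᵥ (B *ᵥ x) := by fun_prop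
  have hqB_nonneg (x : n → ℝ) : 0 ≤ x ⬝ᵥ (B *ᵥ x) := by
    simpa using hB.dotProduct_mulVec_nonneg x
  have hpos : ∀ x ∈ K, 0 < max (x ⬝ᵥ (A *ᵥ x)) (x ⬝ᵥ (B *ᵥ x)) := by
    intro x hx
    have hx0 : x ≠ 0 := Metric.ne_of_mem_sphere hx one_ne_zero
    rcases (hqB_nonneg x).eq_or_lt with hB0 | hB0
    · have hBx : B *ᵥ x = 0 := by
        simpa [← hB0] using (hB.dotProduct_mulVec_zero_iff x).mp (by simpa using hB0.symm)
      exact lt_max_of_lt_left (h x hx0 hBx)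
    · exact lt_max_of_lt_right hB0
  obtain ⟨γ, hγ, hγK⟩ := (isCompact_sphere 0 1).exists_forall_le'
    (hqA.max hqB).continuousOn hpos
  obtain ⟨α, hαK⟩ := (isCompact_sphere (0 : n → ℝ) 1).exists_bound_of_continuousOn
    hqA.continuousOn
  filter_upwards [eventually_gt_atTop 0, eventually_gt_atTop (α / γ)] with r hr hrα
  refine .of_dotProduct_mulVec_pos (hA.add (hB.1.smul (IsSelfAdjoint.all r))) fun x hx ↦ ?_
  have hsphere : ‖x‖⁻¹ • x ∈ K := by simp [K, norm_smul, hx]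
  suffices 0 < (‖x‖⁻¹ • x) ⬝ᵥ ((A + r • B) *ᵥ (‖x‖⁻¹ • x)) by
    rw [dotProduct_mulVec_smul_self] at this
    simpa using pos_of_mul_pos_right this (by positivity)
  set y := ‖x‖⁻¹ • x
  have hsplit : y ⬝ᵥ ((A + r • B) *ᵥ y) = y ⬝ᵥ (A *ᵥ y) + r * (y ⬝ᵥ (B *ᵥ y)) := by
    rw [add_mulVec, dotProduct_add, smul_mulVec, dotProduct_smul, smul_eq_mul]
  rw [hsplit]
  rcases le_max_iff.mp (hγK y hsphere) with hA' | hB'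
  · nlinarith [hqB_nonneg y]
  · have := hαK y hsphere
    rw [Real.norm_eq_abs, abs_le] at this
    rw [div_lt_iff₀ hγ] at hrα
    nlinarith

theorem posDef_sq_smul_one_sub_mul_self [DecidableEq n] {G : Matrix n n ℝ}
    (hG : G.IsHermitian) {ρ : ℝ} (h : ∀ μ ∈ spectrum ℝ G, |μ| < ρ) :
    (ρ ^ 2 • 1 - G * G).PosDef := by
  open scoped MatrixOrder in
  have hcfc : ρ ^ 2 • 1 - G * G = cfc (fun x : ℝ ↦ ρ ^ 2 - x * x) G := by
    rw [cfc_sub _ _ G, cfc_const _ G, cfc_mul _ _ G, cfc_id' ℝ G, Algebra.algebraMap_eq_smul_one]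
  open scoped MatrixOrder in
  rw [← isStrictlyPositive_iff_posDef, hcfc, cfc_isStrictlyPositive_iff _ G]
  intro μ hμ
  have := h μ hμ
  nlinarith [abs_nonneg μ, sq_abs μ]

theorem mem_spectrum_map_ofReal [DecidableEq n] {A : Matrix n n ℝ} {μ : ℝ}
    (h : μ ∈ spectrum ℝ A) :
    (μ : ℂ) ∈ spectrum ℂ (A.map Complex.ofReal) := by
  rw [spectrum.mem_iff, isUnit_iff_isUnit_det, isUnit_iff_ne_zero, not_not] at h ⊢
  have : algebraMap ℂ (Matrix n n ℂ) μ - A.map Complex.ofReal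
      = Complex.ofRealHom.mapMatrix (algebraMap ℝ (Matrix n n ℝ) μ - A) := by
    ext i j
    simp [algebraMap_eq_diagonal, diagonal_apply, apply_ite]
  rw [this, ← RingHom.map_det, h, map_zero]

theorem PosDef.mul_mul_sub_of_sub_inv [DecidableEq n] {S X Q : Matrix n n ℝ}
    (h : (X - S⁻¹ * Q * S⁻¹).PosDef) (hS : S.IsSymm) (hSu : IsUnit S) :
    (S * X * S - Q).PosDef := by
  have hdet := (isUnit_iff_isUnit_det S).mp hSu
  have : S * X * S - Q = Sᴴ * (X - S⁻¹ * Q * S⁻¹) * S := by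
    rw [conjTranspose_eq_transpose_of_trivial, hS.eq, mul_sub, sub_mul, ← mul_assoc, ← mul_assoc,
      mul_nonsing_inv S hdet, one_mul, nonsing_inv_mul_cancel_right S Q hdet]
  rw [this]
  exact h.conjTranspose_mul_mul_same (mulVec_injective_of_isUnit hSu)

end Matrix

namespace IsMoorePenrose

variable {d : ℕ} {Q D : Matrix (Fin d) (Fin d) ℝ}

theorem transpose (hD : IsMoorePenrose Q D) : IsMoorePenrose Qᵀ Dᵀ := by
  obtain ⟨h₁, h₂, h₃, h₄⟩ := hD
  refine ⟨?_, ?_, ?_, ?_⟩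
  · rw [← transpose_mul, ← transpose_mul, ← mul_assoc, h₁]
  · rw [← transpose_mul, ← transpose_mul, ← mul_assoc, h₂]
  · rw [← transpose_mul, transpose_transpose, h₄]
  · rw [← transpose_mul, transpose_transpose, h₃]

theorem unique {D' : Matrix (Fin d) (Fin d) ℝ} (hD : IsMoorePenrose Q D)
    (hD' : IsMoorePenrose Q D') : D = D' := by
  obtain ⟨h₁, h₂, h₃, h₄⟩ := hD
  obtain ⟨h₁', h₂', h₃', h₄'⟩ := hD'
  have hD : D = D * Q * D' := calc
    D = D * (Q * D)ᵀ := by rw [h₃, ← mul_assoc, h₂]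
    _ = D * (Q * D' * Q * D)ᵀ := by rw [h₁']
    _ = D * ((Q * D)ᵀ * (Q * D')ᵀ) := by simp only [transpose_mul, mul_assoc]
    _ = D * Q * D' := by rw [h₃, h₃']; simp only [← mul_assoc, h₂]
  have hD' : D' = D * Q * D' := calc
    D' = (D' * Q)ᵀ * D' := by rw [h₄', h₂']
    _ = (D' * (Q * D * Q))ᵀ * D' := by rw [h₁]
    _ = (D * Q)ᵀ * (D' * Q)ᵀ * D' := by simp only [transpose_mul, mul_assoc]
    _ = D * Q * D' := by rw [h₄, h₄', mul_assoc, h₂']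
  rw [hD, ← hD']

theorem isSymm (hQ : Q.IsSymm) (hD : IsMoorePenrose Q D) : D.IsSymm :=
  (hQ.eq ▸ hD.transpose).unique hD

theorem commute (hQ : Q.IsSymm) (hD : IsMoorePenrose Q D) : Commute Q D := by
  rw [Commute, SemiconjBy, ← hD.2.2.1, transpose_mul, hQ.eq, (hD.isSymm hQ).eq]

theorem posSemidef_one_sub_mul (hD : IsMoorePenrose Q D) : (1 - D * Q).PosSemidef := by
  have hP : (1 - D * Q)ᴴ = 1 - D * Q := by
    rw [conjTranspose_eq_transpose_of_trivial, transpose_sub, transpose_one, hD.2.2.2]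
  have hidem : (1 - D * Q) * (1 - D * Q) = 1 - D * Q := by
    rw [sub_mul, mul_sub, mul_sub, one_mul, mul_one, one_mul, ← mul_assoc, hD.2.1]; abel
  rw [← hidem]
  nth_rw 1 [← hP]
  exact posSemidef_conjTranspose_mul_self _

theorem dotProduct_conj_mulVec_lt {T : Matrix (Fin d) (Fin d) ℝ} (hQ : Q.PosSemidef)
    (hD : IsMoorePenrose Q D) (hT : T.IsSymm) {ρ : ℝ} (hρ : 0 < ρ)
    (hspec : ∀ μ ∈ spectrum ℝ (T * Q), |μ| < ρ) {y : Fin d → ℝ} (hy0 : y ≠ 0)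
    (hy : (1 - D * Q) *ᵥ y = 0) :
    y ⬝ᵥ ((T * Q * T) *ᵥ y) < ρ ^ 2 * (y ⬝ᵥ (D *ᵥ y)) := by
  have hQD : (Q * D) *ᵥ y = y := by
    rw [sub_mulVec, one_mulVec, sub_eq_zero] at hy
    rw [(hD.commute (isHermitian_iff_isSymm.mp hQ.1)).eq, ← hy]
  open scoped MatrixOrder in
  obtain ⟨B, rfl⟩ := CStarAlgebra.nonneg_iff_eq_star_mul_self.mp hQ.nonneg
  simp only [star_eq_conjTranspose, conjTranspose_eq_transpose_of_trivial] at *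
  set G := B * T * Bᵀ
  have hG : G.IsSymm := by
    simp only [G, IsSymm, transpose_mul, transpose_transpose, hT.eq, mul_assoc]
  set u := B *ᵥ (D *ᵥ y)
  have hBu : Bᵀ *ᵥ u = y := by simpa only [u, mulVec_mulVec, ← mul_assoc] using hQD
  have hGspec : ∀ μ ∈ spectrum ℝ G, |μ| < ρ := by
    intro μ hμ
    rcases eq_or_ne μ 0 with rfl | hμ0
    · simpa using hρ
    have : μ ∈ spectrum ℝ (B * (T * Bᵀ)) \ {0} := ⟨by rwa [← mul_assoc], hμ0⟩
    rw [spectrum.nonzero_mul_comm] at this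
    exact hspec μ (by simpa only [mul_assoc] using this.1)
  have hu0 : u ≠ 0 := by
    rintro hu
    rw [← hBu, hu, mulVec_zero] at hy0
    exact hy0 rfl
  have hGu : G *ᵥ u = B *ᵥ (T *ᵥ y) := by simp only [G, ← mulVec_mulVec, hBu]
  have key := (posDef_sq_smul_one_sub_mul_self (isHermitian_iff_isSymm.mpr hG)
    hGspec).dotProduct_mulVec_pos hu0
  rw [star_trivial, sub_mulVec, dotProduct_sub, smul_mulVec, one_mulVec, dotProduct_smul,
    smul_eq_mul, sub_pos] at key
  calc y ⬝ᵥ ((T * (Bᵀ * B) * T) *ᵥ y) = (G *ᵥ u) ⬝ᵥ (G *ᵥ u) := by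
        rw [hGu, mulVec_dotProduct B, mulVec_dotProduct T, hT.eq]
        simp only [mulVec_mulVec, mul_assoc]
    _ = u ⬝ᵥ ((G * G) *ᵥ u) := by rw [mulVec_dotProduct, hG.eq, mulVec_mulVec]
    _ < ρ ^ 2 * (u ⬝ᵥ u) := key
    _ = ρ ^ 2 * (y ⬝ᵥ (D *ᵥ y)) := by
        rw [mulVec_dotProduct, mulVec_mulVec, mulVec_mulVec, hQD, dotProduct_comm]

end IsMoorePenrose

theorem stmt_9_general {d : ℕ} (M L D : Matrix (Fin d) (Fin d) ℝ)
    (hM : M.IsSymm) (hL : L.IsSymm)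
    (hLM : (L - M).PosSemidef) (hMLinv : IsUnit (M + L))
    (hD : IsMoorePenrose (L - M) D)
    (Pi0 : Matrix (Fin d) (Fin d) ℝ) (hPi0 : Pi0 = 1 - D * (L - M)) :
    ∀ ρ : ℝ,
      (∀ μ ∈ spectrum ℂ (((M + L)⁻¹ * (L - M)).map (Complex.ofReal : ℝ → ℂ)), ‖μ‖ < ρ) →
      ∃ r₀ : ℝ, 0 < r₀ ∧ ∀ r : ℝ, r₀ ≤ r →
        (ρ ^ 2 • ((L + M) * (D + r • Pi0) * (L + M)) - (L - M)).PosDef := by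
  intro ρ hρ
  rcases isEmpty_or_nonempty (Fin d) with _ | _
  · exact ⟨1, one_pos, fun _ _ ↦ .of_isEmpty _⟩
  subst hPi0
  rw [add_comm L M]
  set S := M + L
  set Q := L - M
  have hρ0 : 0 < ρ := by
    obtain ⟨μ, hμ⟩ := spectrum.nonempty_of_isAlgClosed_of_finiteDimensional ℂ
      ((S⁻¹ * Q).map Complex.ofReal)
    exact (norm_nonneg μ).trans_lt (hρ μ hμ)
  have hS : S.IsSymm := hM.add hL
  have hQ : Q.IsSymm := isHermitian_iff_isSymm.mp hLM.1
  have hA : (ρ ^ 2 • D - S⁻¹ * Q * S⁻¹).IsHermitian := by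
    rw [isHermitian_iff_isSymm]
    refine ((hD.isSymm hQ).smul _).sub ?_
    simp only [IsSymm, transpose_mul, hS.inv.eq, hQ.eq, mul_assoc]
  have hfinsler := eventually_posDef_add_smul hA hD.posSemidef_one_sub_mul fun y hy0 hy ↦ by
    have := hD.dotProduct_conj_mulVec_lt hLM hS.inv hρ0
      (fun μ hμ ↦ by simpa using hρ _ (mem_spectrum_map_ofReal hμ)) hy0 hy
    simp only [sub_mulVec, dotProduct_sub, smul_mulVec, dotProduct_smul, smul_eq_mul]
    linarith
  obtain ⟨r₁, hr₁⟩ := eventually_atTop.mp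
    ((tendsto_id.const_mul_atTop (pow_pos hρ0 2)).eventually hfinsler)
  refine ⟨max r₁ 1, lt_max_of_lt_right one_pos, fun r hr ↦ ?_⟩
  have hX : (ρ ^ 2 • (D + r • (1 - D * Q)) - S⁻¹ * Q * S⁻¹).PosDef := by
    convert hr₁ r (le_of_max_le_left hr) using 1
    simp only [id, smul_add, smul_smul]
    abel
  rw [← smul_mul_assoc, ← mul_smul_comm]
  exact hX.mul_mul_sub_of_sub_inv hS hMLinv

theorem stmt_9 {d : ℕ} (M L D : Matrix (Fin d) (Fin d) ℝ)
    (hM : M.IsSymm) (hL : L.IsSymm) (hMinv : IsUnit M) (hLinv : IsUnit L)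
    (hLM : (L - M).PosSemidef) (hcong : MatCongruent M L) (hMLinv : IsUnit (M + L))
    (hD : IsMoorePenrose (L - M) D)
    (Pi0 : Matrix (Fin d) (Fin d) ℝ) (hPi0 : Pi0 = 1 - D * (L - M)) :
    ∀ ρ : ℝ,
      (∀ μ ∈ spectrum ℂ (((M + L)⁻¹ * (L - M)).map (Complex.ofReal : ℝ → ℂ)), ‖μ‖ < ρ) →
      ∃ r₀ : ℝ, 0 < r₀ ∧ ∀ r : ℝ, r₀ ≤ r →
        (ρ ^ 2 • ((L + M) * (D + r • Pi0) * (L + M)) - (L - M)).PosDef :=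
  stmt_9_general M L D hM hL hLM hMLinv hD Pi0 hPi0
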